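/- Asymptotic size of the SDL test on the null coordinates: suppose the empirical distribution of the triples (θ_{0,i}, θ̂ᵘ_i, (Σ⁻¹)_{ii})_{i≤p} converges weakly almost surely to the law of (Θ₀, Θ₀ + τ Υ^{1/2} Z, Υ) with Z ~ N(0,1) independent of (Θ₀,Υ), τ > 0, and Υ > 0 a.s., and suppose lim_p |S₀ᶜ(p)|/p = P(Θ₀ = 0) > 0. Define the test T_i = 1{ |θ̂ᵘ_i| / (τ [(Σ⁻¹)_{ii}]^{1/2}) ≥ Φ⁻¹(1−α/2) }. Then almost surely lim_{p→∞} (1/|S₀ᶜ(p)|) ∑_{i ∈ S₀ᶜ(p)} T_i = α. -/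

import Mathlib

open MeasureTheory ProbabilityTheory Filter

/-- The standard normal CDF. -/
noncomputable def Phi (x : ℝ) : ℝ :=
  ∫ t in Set.Iic x, Real.exp (-t ^ 2 / 2) / Real.sqrt (2 * Real.pi)

/-- The inverse of the standard normal CDF (on `(0,1)`). -/
noncomputable def PhiInv : ℝ → ℝ := Function.invFun Phi

/-- The function `G(α, u)` of the paper. -/
noncomputable def G (α u : ℝ) : ℝ :=
  2 - Phi (PhiInv (1 - α / 2) + u) - Phi (PhiInv (1 - α / 2) - u)

/-! The rejected null coordinates lie in the closed set `{θ = 0, c τ √u ≤ |y|}` and the accepted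
ones in the closed set `{θ = 0, u ≤ 0 ∨ |y| ≤ c τ √u}`, where `c = Φ⁻¹(1 - α/2)`. By the
portmanteau theorem for the empirical measures, the limsup of the fraction of coordinates in
each closed set is at most its mass under the limit law, namely `π₀ α` and `π₀ (1 - α)`, since
`Υ > 0` a.s. and `P(|Z| ≥ c) = α`. The two fractions add up to the null fraction, which tends to
`π₀ = π₀ α + π₀ (1 - α)`, so both bounds are attained; dividing by the null fraction gives `α`. -/

open Set
open scoped NNReal ENNReal Topology BoundedContinuousFunction

instance : NullSingletonClass (gaussianReal 0 1) := nullSingletonClass_gaussianReal one_ne_zero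

lemma Phi_eq_integral_gaussianPDFReal (x : ℝ) :
    Phi x = ∫ t in Iic x, gaussianPDFReal 0 1 t := by
  simp [Phi, gaussianPDFReal, div_eq_inv_mul]

lemma Phi_eq_measureReal (x : ℝ) : Phi x = (gaussianReal 0 1).real (Iic x) := by
  rw [measureReal_def, gaussianReal_apply_eq_integral 0 one_ne_zero,
    ENNReal.toReal_ofReal (setIntegral_nonneg measurableSet_Iic
      fun t _ ↦ gaussianPDFReal_nonneg 0 1 t), Phi_eq_integral_gaussianPDFReal]

lemma Phi_eq_cdf : Phi = cdf (gaussianReal 0 1) := by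
  ext x
  rw [Phi_eq_measureReal, cdf_eq_real]

lemma monotone_Phi : Monotone Phi := Phi_eq_cdf ▸ monotone_cdf _

lemma continuous_Phi : Continuous Phi := by
  have hint : Integrable (gaussianPDFReal 0 1) := integrable_gaussianPDFReal 0 1
  have h : Phi = fun x ↦ Phi 0 + ∫ t in (0 : ℝ)..x, gaussianPDFReal 0 1 t := by
    ext x
    rw [Phi_eq_integral_gaussianPDFReal, Phi_eq_integral_gaussianPDFReal,
      ← intervalIntegral.integral_Iic_sub_Iic hint.integrableOn hint.integrableOn]
    ring
  rw [h]
  exact continuous_const.add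
    (intervalIntegral.continuous_primitive (fun a b ↦ hint.intervalIntegrable) 0)

lemma gaussianReal_real_Ici (x : ℝ) : (gaussianReal 0 1).real (Ici x) = 1 - Phi x := by
  rw [← compl_Iio, measureReal_compl measurableSet_Iio, probReal_univ,
    measureReal_congr Iio_ae_eq_Iic, Phi_eq_measureReal]

lemma gaussianReal_real_Iic_neg (x : ℝ) :
    (gaussianReal 0 1).real (Iic (-x)) = (gaussianReal 0 1).real (Ici x) := by
  have h := congrArg (fun μ : Measure ℝ ↦ μ.real (Ici x)) (gaussianReal_map_neg (μ := 0) (v := 1))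
  simp only [neg_zero] at h
  rw [← h, map_measureReal_apply (by fun_prop) measurableSet_Ici]
  congr 1
  ext t
  simp

lemma Phi_neg (x : ℝ) : Phi (-x) = 1 - Phi x := by
  rw [Phi_eq_measureReal, gaussianReal_real_Iic_neg, gaussianReal_real_Ici]

lemma Phi_zero : Phi 0 = 1 / 2 := by
  have h := Phi_neg 0
  rw [neg_zero] at h
  linarith

lemma Phi_PhiInv {y : ℝ} (hy : y ∈ Ioo (0 : ℝ) 1) : Phi (PhiInv y) = y := by
  have hbot := Phi_eq_cdf ▸ tendsto_cdf_atBot (μ := gaussianReal 0 1)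
  have htop := Phi_eq_cdf ▸ tendsto_cdf_atTop (μ := gaussianReal 0 1)
  obtain ⟨a, ha⟩ := (hbot.eventually (eventually_le_nhds hy.1)).exists
  obtain ⟨b, hb⟩ := (htop.eventually (eventually_ge_nhds hy.2)).exists
  exact Function.invFun_eq (mem_range_of_exists_le_of_exists_ge continuous_Phi ⟨a, ha⟩ ⟨b, hb⟩)

lemma zero_lt_PhiInv {y : ℝ} (hy : y ∈ Ioo (1 / 2 : ℝ) 1) : 0 < PhiInv y := by
  by_contra h
  have hle := monotone_Phi (not_lt.1 h)
  rw [Phi_PhiInv ⟨by linarith [hy.1], hy.2⟩, Phi_zero] at hle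
  linarith [hy.1]

lemma gaussianReal_real_le_abs {c : ℝ} (hc : 0 < c) :
    (gaussianReal 0 1).real {z | c ≤ |z|} = 2 * (1 - Phi c) := by
  have hsplit : {z : ℝ | c ≤ |z|} = Iic (-c) ∪ Ici c := by
    ext z
    simp only [mem_ofPred_eq, mem_union, mem_Iic, mem_Ici, le_abs']
  rw [hsplit, measureReal_union (Iic_disjoint_Ici.2 (by linarith)) measurableSet_Ici,
    gaussianReal_real_Iic_neg, gaussianReal_real_Ici]
  ring

lemma gaussianReal_real_abs_le {c : ℝ} (hc : 0 ≤ c) :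
    (gaussianReal 0 1).real {z | |z| ≤ c} = 2 * Phi c - 1 := by
  have hsplit : {z : ℝ | |z| ≤ c} = Icc (-c) c := by
    ext z
    simp [abs_le]
  rw [hsplit, ← measureReal_congr Ioc_ae_eq_Icc, measureReal_def,
    ← measure_cdf (μ := gaussianReal 0 1), StieltjesFunction.measure_Ioc, ← Phi_eq_cdf, Phi_neg,
    ENNReal.toReal_ofReal]
  · ring
  · linarith [monotone_Phi hc, Phi_zero]

noncomputable def empiricalMeasure {X : Type*} [MeasurableSpace X] {p : ℕ} (x : Fin p → X) :
    Measure X :=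
  (p : ℝ≥0)⁻¹ • ∑ i, Measure.dirac (x i)

section Empirical

variable {X : Type*} [MeasurableSpace X]

instance {p : ℕ} (x : Fin p → X) : IsFiniteMeasure (empiricalMeasure x) := by
  unfold empiricalMeasure; infer_instance

lemma empiricalMeasure_real_apply {p : ℕ} (x : Fin p → X) {S : Set X} (hS : MeasurableSet S) :
    (empiricalMeasure x).real S = {i | x i ∈ S}.ncard / p := by
  classical
  rw [empiricalMeasure, measureReal_def, Measure.smul_apply, Measure.finsetSum_apply]
  simp_rw [Measure.dirac_apply' _ hS]
  rw [Set.ncard_eq_toFinset_card']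
  simp [Finset.sum_indicator_eq_sum_filter, div_eq_inv_mul, ENNReal.smul_def]

lemma ncard_div_le_empiricalMeasure_real {p : ℕ} (x : Fin p → X) {S : Set X}
    (hS : MeasurableSet S) {t : Set (Fin p)} (ht : ∀ i ∈ t, x i ∈ S) :
    (t.ncard : ℝ) / p ≤ (empiricalMeasure x).real S := by
  rw [empiricalMeasure_real_apply x hS]
  exact div_le_div_of_nonneg_right (mod_cast ncard_le_ncard fun i hi ↦ ht i hi) p.cast_nonneg

lemma integral_empiricalMeasure [TopologicalSpace X] [OpensMeasurableSpace X] {p : ℕ}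
    (x : Fin p → X) (f : X →ᵇ ℝ) :
    ∫ v, f v ∂(empiricalMeasure x) = 1 / p * ∑ i, f (x i) := by
  rw [empiricalMeasure, integral_smul_nnreal_measure,
    integral_finsetSum_measure fun i _ ↦ f.integrable _]
  simp_rw [integral_dirac' _ _ f.continuous.stronglyMeasurable]
  simp [NNReal.smul_def, div_eq_inv_mul]

lemma eventually_empiricalMeasure_real_lt [TopologicalSpace X] [OpensMeasurableSpace X]
    [HasOuterApproxClosed X] {x : (p : ℕ) → Fin p → X} {ν : Measure X} [IsFiniteMeasure ν]
    (hconv : ∀ f : X →ᵇ ℝ,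
      Tendsto (fun p : ℕ ↦ 1 / (p : ℝ) * ∑ i, f (x p i)) atTop (𝓝 (∫ v, f v ∂ν)))
    {F : Set X} (hF : IsClosed F) {r : ℝ} (hr : ν.real F < r) :
    ∀ᶠ p in atTop, (empiricalMeasure (x p)).real F < r := by
  let μs : ℕ → FiniteMeasure X := fun p ↦ ⟨empiricalMeasure (x p), inferInstance⟩
  have hlim : Tendsto μs atTop (𝓝 ⟨ν, inferInstance⟩) :=
    FiniteMeasure.tendsto_iff_forall_integral_tendsto.2 fun f ↦ by
      simpa only [μs, FiniteMeasure.toMeasure_mk, integral_empiricalMeasure] using hconv f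
  have hlt : ν F < ENNReal.ofReal r := by
    rwa [← ENNReal.ofReal_toReal (measure_ne_top ν F), ENNReal.ofReal_lt_ofReal_iff
      (measureReal_nonneg.trans_lt hr)]
  filter_upwards [eventually_lt_of_limsup_lt
    ((FiniteMeasure.limsup_measure_closed_le_of_tendsto hlim hF).trans_lt hlt)] with p hp
  exact ENNReal.toReal_lt_of_lt_ofReal hp

end Empirical

lemma tendsto_of_tendsto_add_of_eventually_lt {ι : Type*} {l : Filter ι} {a b : ι → ℝ}
    {x y : ℝ} (hsum : Tendsto (fun i ↦ a i + b i) l (𝓝 (x + y)))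
    (ha : ∀ r, x < r → ∀ᶠ i in l, a i < r) (hb : ∀ r, y < r → ∀ᶠ i in l, b i < r) :
    Tendsto a l (𝓝 x) := by
  refine tendsto_order.2 ⟨fun r hr ↦ ?_, ha⟩
  have hδ : 0 < (x - r) / 2 := by linarith
  filter_upwards [hsum.eventually (lt_mem_nhds (by linarith : x + y - (x - r) / 2 < x + y)),
    hb _ (lt_add_of_pos_right y hδ)] with i hsumi hbi
  linarith

lemma tendsto_ncard_div_of_forall_mem_isClosed {X : Type*} [MeasurableSpace X]
    [TopologicalSpace X] [OpensMeasurableSpace X] [HasOuterApproxClosed X]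
    {x : (p : ℕ) → Fin p → X} {ν : Measure X} [IsFiniteMeasure ν]
    (hconv : ∀ f : X →ᵇ ℝ,
      Tendsto (fun p : ℕ ↦ 1 / (p : ℝ) * ∑ i, f (x p i)) atTop (𝓝 (∫ v, f v ∂ν)))
    {N s : (p : ℕ) → Set (Fin p)} (hsN : ∀ p, s p ⊆ N p) {F G : Set X}
    (hF : IsClosed F) (hG : IsClosed G)
    (hsF : ∀ p, ∀ i ∈ s p, x p i ∈ F) (hsG : ∀ p, ∀ i ∈ N p \ s p, x p i ∈ G)
    (hN : Tendsto (fun p : ℕ ↦ ((N p).ncard : ℝ) / p) atTop (𝓝 (ν.real F + ν.real G))) :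
    Tendsto (fun p : ℕ ↦ ((s p).ncard : ℝ) / p) atTop (𝓝 (ν.real F)) := by
  have hbound : ∀ {K : Set X} {t : (p : ℕ) → Set (Fin p)}, IsClosed K →
      (∀ p, ∀ i ∈ t p, x p i ∈ K) → ∀ r, ν.real K < r →
      ∀ᶠ p in atTop, ((t p).ncard : ℝ) / p < r := fun hK ht r hr ↦
    (eventually_empiricalMeasure_real_lt hconv hK hr).mono fun p hp ↦
      (ncard_div_le_empiricalMeasure_real _ hK.measurableSet (ht p)).trans_lt hp
  refine tendsto_of_tendsto_add_of_eventually_lt (b := fun p ↦ ((N p \ s p).ncard : ℝ) / p)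
    (hN.congr fun p ↦ ?_) (hbound hF hsF) (hbound hG hsG)
  rw [← add_div, add_comm, ← Nat.cast_add, ncard_sdiff_add_ncard_of_subset (hsN p)]

lemma tendsto_div_of_tendsto_div_natCast {a b : ℕ → ℝ} {x y : ℝ}
    (ha : Tendsto (fun p : ℕ ↦ a p / p) atTop (𝓝 x))
    (hb : Tendsto (fun p : ℕ ↦ b p / p) atTop (𝓝 y)) (hy : y ≠ 0) :
    Tendsto (fun p ↦ a p / b p) atTop (𝓝 (x / y)) := by
  refine (ha.div hb hy).congr' ?_
  filter_upwards [eventually_ne_atTop 0] with p hp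
  exact div_div_div_cancel_right₀ (Nat.cast_ne_zero.2 hp) _ _

section NullRegions

variable {c τ : ℝ}

def nullRejectSet (c τ : ℝ) : Set (ℝ × ℝ × ℝ) :=
  {v | v.1 = 0 ∧ c * (τ * Real.sqrt v.2.2) ≤ |v.2.1|}

/-- The disjunct `v.2.2 ≤ 0` catches the accepted triples at which the test statistic
`|y| / (τ √u)` is the junk value `0`. -/
def nullAcceptSet (c τ : ℝ) : Set (ℝ × ℝ × ℝ) :=
  {v | v.1 = 0 ∧ (v.2.2 ≤ 0 ∨ |v.2.1| ≤ c * (τ * Real.sqrt v.2.2))}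

lemma isClosed_nullRejectSet : IsClosed (nullRejectSet c τ) := by
  show IsClosed ({v : ℝ × ℝ × ℝ | v.1 = 0} ∩ {v | c * (τ * Real.sqrt v.2.2) ≤ |v.2.1|})
  exact (isClosed_eq continuous_fst continuous_const).inter
    (isClosed_le (by fun_prop) (by fun_prop))

lemma isClosed_nullAcceptSet : IsClosed (nullAcceptSet c τ) := by
  show IsClosed ({v : ℝ × ℝ × ℝ | v.1 = 0} ∩
    ({v | v.2.2 ≤ 0} ∪ {v | |v.2.1| ≤ c * (τ * Real.sqrt v.2.2)}))
  exact (isClosed_eq continuous_fst continuous_const).inter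
    ((isClosed_le (by fun_prop) continuous_const).union (isClosed_le (by fun_prop) (by fun_prop)))

lemma mem_nullRejectSet_of_le_div (hc : 0 < c) (hτ : 0 < τ) {θ y u : ℝ} (hθ : θ = 0)
    (h : c ≤ |y| / (τ * Real.sqrt u)) : (θ, y, u) ∈ nullRejectSet c τ := by
  rcases (mul_nonneg hτ.le (Real.sqrt_nonneg u)).eq_or_lt with h0 | hs
  · rw [← h0, div_zero] at h
    exact absurd h (not_le.2 hc)
  · exact ⟨hθ, (le_div_iff₀ hs).1 h⟩

lemma mem_nullAcceptSet_of_not_le_div (hτ : 0 < τ) {θ y u : ℝ} (hθ : θ = 0)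
    (h : ¬ c ≤ |y| / (τ * Real.sqrt u)) : (θ, y, u) ∈ nullAcceptSet c τ := by
  refine ⟨hθ, (le_or_gt u 0).imp id fun hu ↦ ?_⟩
  exact ((div_lt_iff₀ (mul_pos hτ (Real.sqrt_pos.2 hu))).1 (not_le.1 h)).le

lemma mem_nullRejectSet_iff (hτ : 0 < τ) {θ u z : ℝ} (hu : 0 < u) :
    (θ, θ + τ * Real.sqrt u * z, u) ∈ nullRejectSet c τ ↔ θ = 0 ∧ c ≤ |z| := by
  have hs : 0 < τ * Real.sqrt u := mul_pos hτ (Real.sqrt_pos.2 hu)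
  simp only [nullRejectSet, mem_ofPred_eq]
  refine and_congr_right fun hθ ↦ ?_
  rw [hθ, zero_add, abs_mul, abs_of_pos hs, mul_comm c]
  exact mul_le_mul_iff_right₀ hs

lemma mem_nullAcceptSet_iff (hτ : 0 < τ) {θ u z : ℝ} (hu : 0 < u) :
    (θ, θ + τ * Real.sqrt u * z, u) ∈ nullAcceptSet c τ ↔ θ = 0 ∧ |z| ≤ c := by
  have hs : 0 < τ * Real.sqrt u := mul_pos hτ (Real.sqrt_pos.2 hu)
  simp only [nullAcceptSet, mem_ofPred_eq]
  refine and_congr_right fun hθ ↦ ?_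
  rw [hθ, zero_add, abs_mul, abs_of_pos hs, mul_comm c, mul_le_mul_iff_right₀ hs,
    or_iff_right (not_le.2 hu)]

end NullRegions

section LimitLaw

variable (τ : ℝ) {μ₀ : Measure (ℝ × ℝ)}

noncomputable def sdlLimitMap (q : (ℝ × ℝ) × ℝ) : ℝ × ℝ × ℝ :=
  (q.1.1, q.1.1 + τ * Real.sqrt q.1.2 * q.2, q.1.2)

lemma measurable_sdlLimitMap : Measurable (sdlLimitMap τ) := by
  unfold sdlLimitMap; fun_prop

lemma map_sdlLimitMap_apply (hpos : ∀ᵐ q ∂μ₀, 0 < q.2) (γ : Measure ℝ) [SFinite γ]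
    {S : Set (ℝ × ℝ × ℝ)} (hS : MeasurableSet S) (B : Set ℝ)
    (hmem : ∀ θ u z : ℝ, 0 < u → ((θ, θ + τ * Real.sqrt u * z, u) ∈ S ↔ θ = 0 ∧ z ∈ B)) :
    (μ₀.prod γ).map (sdlLimitMap τ) S = μ₀ {q | q.1 = 0} * γ B := by
  have hpre : sdlLimitMap τ ⁻¹' S =ᵐ[μ₀.prod γ] {q : ℝ × ℝ | q.1 = 0} ×ˢ B := by
    filter_upwards [Measure.quasiMeasurePreserving_fst.ae hpos] with q hq
    exact propext (hmem q.1.1 q.1.2 q.2 hq)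
  rw [Measure.map_apply (measurable_sdlLimitMap τ) hS, measure_congr hpre, Measure.prod_prod]

variable {τ} (c : ℝ)

lemma map_sdlLimitMap_real_nullRejectSet (hτ : 0 < τ) (hpos : ∀ᵐ q ∂μ₀, 0 < q.2)
    (γ : Measure ℝ) [SFinite γ] :
    ((μ₀.prod γ).map (sdlLimitMap τ)).real (nullRejectSet c τ) =
      μ₀.real {q | q.1 = 0} * γ.real {z | c ≤ |z|} := by
  rw [measureReal_def, map_sdlLimitMap_apply τ hpos γ isClosed_nullRejectSet.measurableSet _
    fun _ _ _ hu ↦ mem_nullRejectSet_iff hτ hu, ENNReal.toReal_mul]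
  rfl

lemma map_sdlLimitMap_real_nullAcceptSet (hτ : 0 < τ) (hpos : ∀ᵐ q ∂μ₀, 0 < q.2)
    (γ : Measure ℝ) [SFinite γ] :
    ((μ₀.prod γ).map (sdlLimitMap τ)).real (nullAcceptSet c τ) =
      μ₀.real {q | q.1 = 0} * γ.real {z | |z| ≤ c} := by
  rw [measureReal_def, map_sdlLimitMap_apply τ hpos γ isClosed_nullAcceptSet.measurableSet _
    fun _ _ _ hu ↦ mem_nullAcceptSet_iff hτ hu, ENNReal.toReal_mul]
  rfl

end LimitLaw

/-- Theorem (asymptotic size of the SDL test): assume the standard distributional limit, i.e.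
the empirical distribution of `(θ_{0,i}, θ̂ᵘ_i, (Σ⁻¹)_{ii})_{i ≤ p}` converges weakly, almost
surely, to the law of `(Θ₀, Θ₀ + τ √Υ Z, Υ)` with `Z ~ N(0,1)` independent of `(Θ₀, Υ)`,
`τ > 0`, `Υ > 0` a.s., and that the fraction of null coordinates converges to
`P(Θ₀ = 0) > 0`.  Then, almost surely, the fraction of null coordinates rejected by the SDL
test at level `α` converges to `α`. -/
theorem sdl_test_size {Ω : Type*} [MeasurableSpace Ω] (P : MeasureTheory.Measure Ω)
    [MeasureTheory.IsProbabilityMeasure P]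
    (θ0 : (p : ℕ) → Fin p → ℝ) (ups : (p : ℕ) → Fin p → ℝ)
    (θhat : Ω → (p : ℕ) → Fin p → ℝ)
    (τ : ℝ) (hτ : 0 < τ) (α : ℝ) (hα : α ∈ Set.Ioo (0 : ℝ) 1)
    (μ₀law : MeasureTheory.Measure (ℝ × ℝ)) [MeasureTheory.IsProbabilityMeasure μ₀law]
    (hpos : μ₀law {q : ℝ × ℝ | q.2 ≤ 0} = 0)
    (ν : MeasureTheory.Measure (ℝ × ℝ × ℝ))
    (hν : ν = MeasureTheory.Measure.map
        (fun q : (ℝ × ℝ) × ℝ => (q.1.1, q.1.1 + τ * Real.sqrt q.1.2 * q.2, q.1.2))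
        (μ₀law.prod (gaussianReal 0 1)))
    (hconv : ∀ᵐ ω ∂P, ∀ f : BoundedContinuousFunction (ℝ × ℝ × ℝ) ℝ,
      Tendsto (fun p : ℕ => (1 / (p : ℝ)) * ∑ i, f (θ0 p i, θhat ω p i, ups p i))
        atTop (nhds (∫ v, f v ∂ν)))
    (hnullpos : 0 < (μ₀law {q : ℝ × ℝ | q.1 = 0}).toReal)
    (hnullfrac : Tendsto (fun p : ℕ => ({i : Fin p | θ0 p i = 0}.ncard : ℝ) / p) atTop
      (nhds (μ₀law {q : ℝ × ℝ | q.1 = 0}).toReal)) :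
    ∀ᵐ ω ∂P, Tendsto
      (fun p : ℕ =>
        ({i : Fin p | θ0 p i = 0 ∧
            PhiInv (1 - α / 2) ≤ |θhat ω p i| / (τ * Real.sqrt (ups p i))}.ncard : ℝ) /
          ({i : Fin p | θ0 p i = 0}.ncard : ℝ))
      atTop (nhds α) := by
  have hα' : 1 - α / 2 ∈ Ioo (1 / 2 : ℝ) 1 := ⟨by linarith [hα.2], by linarith [hα.1]⟩
  set c := PhiInv (1 - α / 2)
  have hPhi : Phi c = 1 - α / 2 := Phi_PhiInv ⟨by linarith [hα'.1], hα'.2⟩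
  have hc : 0 < c := zero_lt_PhiInv hα'
  have hpos' : ∀ᵐ q ∂μ₀law, 0 < q.2 := by simpa only [ae_iff, not_lt] using hpos
  replace hν : ν = (μ₀law.prod (gaussianReal 0 1)).map (sdlLimitMap τ) := hν
  have : IsProbabilityMeasure ν :=
    hν ▸ Measure.isProbabilityMeasure_map (measurable_sdlLimitMap τ).aemeasurable
  have hrej : ν.real (nullRejectSet c τ) = μ₀law.real {q | q.1 = 0} * α := by
    rw [hν, map_sdlLimitMap_real_nullRejectSet c hτ hpos', gaussianReal_real_le_abs hc, hPhi]
    ring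
  have hacc : ν.real (nullAcceptSet c τ) = μ₀law.real {q | q.1 = 0} * (1 - α) := by
    rw [hν, map_sdlLimitMap_real_nullAcceptSet c hτ hpos', gaussianReal_real_abs_le hc.le, hPhi]
    ring
  filter_upwards [hconv] with ω hω
  have hrejfrac := tendsto_ncard_div_of_forall_mem_isClosed hω
    (s := fun p ↦ {i | θ0 p i = 0 ∧ c ≤ |θhat ω p i| / (τ * Real.sqrt (ups p i))})
    (fun p i hi ↦ hi.1) isClosed_nullRejectSet isClosed_nullAcceptSet
    (fun p i hi ↦ mem_nullRejectSet_of_le_div hc hτ hi.1 hi.2)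
    (fun p i hi ↦ mem_nullAcceptSet_of_not_le_div hτ hi.1 fun h ↦ hi.2 ⟨hi.1, h⟩)
    (by rwa [hrej, hacc, ← mul_add, add_sub_cancel, mul_one])
  rw [hrej] at hrejfrac
  have hratio := tendsto_div_of_tendsto_div_natCast hrejfrac hnullfrac hnullpos.ne'
  rwa [measureReal_def, mul_div_cancel_left₀ α hnullpos.ne'] at hratio
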